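/- arXiv:1910.03798 — 3 statements merged into one kernel-verified Lean document; each statement's English description precedes it below -/
import Mathlib

section
/- Let p_1, ..., p_n be real numbers in [0,1) such that the product of (1-p_i) over i = 1..n equals 1/e. Then the probability that exactly one of n independent Bernoulli random variables X_i (with success probabilities p_i) equals 1, namely the sum over j of p_j · ∏_{i≠j}(1-p_i), is at least 1/e. -/
/-! Writing `P = ∏ i, (1 - p i)`, the probability of exactly one success is `P * ∑ j, p j / (1 - p j)`,
and `p / (1 - p) ≥ -log (1 - p)` bounds it below by `-P * log P`, which equals `1 / e` when `P = 1 / e`. -/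

open Finset Real

lemma Finset.prod_erase_eq_div₀ {ι M : Type*} [DecidableEq ι] [CommGroupWithZero M]
    {s : Finset ι} {f : ι → M} {a : ι} (ha : a ∈ s) (hfa : f a ≠ 0) :
    ∏ x ∈ s.erase a, f x = (∏ x ∈ s, f x) / f a := by
  rw [eq_div_iff hfa, prod_erase_mul _ _ ha]

lemma Real.neg_log_one_sub_le_div {p : ℝ} (hp : p < 1) : -log (1 - p) ≤ p / (1 - p) := by
  have hlog := one_sub_inv_le_log_of_pos (sub_pos.2 hp)
  have hinv : 1 - (1 - p)⁻¹ = -(p / (1 - p)) := by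
    field_simp [(sub_pos.2 hp).ne']
    ring
  linarith

theorem neg_mul_log_prod_le_sum_mul_prod_erase {ι : Type*} [DecidableEq ι] (s : Finset ι)
    (p : ι → ℝ) (hp : ∀ i ∈ s, p i < 1) :
    -((∏ i ∈ s, (1 - p i)) * log (∏ i ∈ s, (1 - p i))) ≤
      ∑ j ∈ s, p j * ∏ i ∈ s.erase j, (1 - p i) := by
  have hq : ∀ i ∈ s, 0 < 1 - p i := fun i hi => sub_pos.2 (hp i hi)
  set P := ∏ i ∈ s, (1 - p i)
  have hP : 0 ≤ P := prod_nonneg fun i hi => (hq i hi).le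
  calc -(P * log P) = (∑ j ∈ s, -log (1 - p j)) * P := by
        rw [log_prod fun i hi => (hq i hi).ne', sum_neg_distrib]
        ring
    _ ≤ (∑ j ∈ s, p j / (1 - p j)) * P := by
        gcongr with j hj
        exact neg_log_one_sub_le_div (hp j hj)
    _ = ∑ j ∈ s, p j * ∏ i ∈ s.erase j, (1 - p i) := by
        rw [sum_mul]
        refine sum_congr rfl fun j hj => ?_
        rw [prod_erase_eq_div₀ hj (hq j hj).ne']
        ring

theorem stmt1_general (n : ℕ) (p : Fin n → ℝ)
    (h1 : ∀ i, p i < 1)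
    (hprod : ∏ i, (1 - p i) = 1 / Real.exp 1) :
    1 / Real.exp 1 ≤ ∑ j, p j * ∏ i ∈ Finset.univ.erase j, (1 - p i) := by
  have h := neg_mul_log_prod_le_sum_mul_prod_erase univ p fun i _ => h1 i
  rwa [hprod, one_div, log_inv, log_exp, mul_neg, mul_one, neg_neg, ← one_div] at h

theorem stmt1 (n : ℕ) (p : Fin n → ℝ)
    (h0 : ∀ i, 0 ≤ p i) (h1 : ∀ i, p i < 1)
    (hprod : ∏ i, (1 - p i) = 1 / Real.exp 1) :
    1 / Real.exp 1 ≤ ∑ j, p j * ∏ i ∈ Finset.univ.erase j, (1 - p i) :=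
  stmt1_general n p h1 hprod
end

section
/- For any integers 1 ≤ i ≤ n, we have (1/n) + ((i-1)/n) · ∑_{j=i+1}^{n} 1/(j-1) ≤ 2/n + (1/e), where the bound follows because α·ln(1/α) ≤ 1/e for all α ∈ (0,1]. -/
/-!
Shifting the index turns the sum into the harmonic tail `∑_{k = i}^{n-1} 1/k`, which telescopes
against `1/k ≤ log k - log (k - 1)` to at most `log (n / (i - 1))`. With `α = (i - 1)/n` the second
summand is therefore at most `-α log α`, and `-x log x ≤ 1/e` follows from `-x log x ≤ 1 - x`
applied at `x = e α`. For `i ≤ 1` the second summand is not positive.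
-/

open Finset Real

theorem Real.negMulLog_le_inv_exp_one {x : ℝ} (hx : 0 ≤ x) : negMulLog x ≤ (exp 1)⁻¹ := by
  have h := negMulLog_le_one_sub_self (mul_nonneg (exp_pos 1).le hx)
  rw [negMulLog_mul, negMulLog, log_exp] at h
  rw [← one_div, le_div_iff₀' (exp_pos 1)]
  linarith

theorem Real.inv_add_one_le_log_sub_log {x : ℝ} (hx : 0 < x) : (x + 1)⁻¹ ≤ log (x + 1) - log x := by
  have h := one_sub_inv_le_log_of_pos (x := (x + 1) / x) (by positivity)
  rw [log_div (by positivity) hx.ne', inv_div] at h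
  calc (x + 1)⁻¹ = 1 - x / (x + 1) := by field_simp; ring
    _ ≤ _ := h

theorem sum_Ioc_inv_le_log_sub_log {a b : ℕ} (ha : a ≠ 0) (hab : a ≤ b) :
    ∑ k ∈ Ioc a b, (k : ℝ)⁻¹ ≤ log b - log a := by
  induction b, hab using Nat.le_induction with
  | base => simp
  | succ b hab ih =>
    have hb : (0 : ℝ) < b := by exact_mod_cast (Nat.pos_of_ne_zero ha).trans_le hab
    rw [sum_Ioc_succ_top hab]
    push_cast
    linarith [inv_add_one_le_log_sub_log hb]

theorem sum_Ioc_succ_one_div_sub_one (a b : ℕ) :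
    ∑ j ∈ Ioc (a + 1) (b + 1), 1 / ((j : ℝ) - 1) = ∑ k ∈ Ioc a b, (k : ℝ)⁻¹ := by
  rw [← map_add_right_Ioc, sum_map]
  simp

theorem div_succ_mul_sum_Ioc_inv_le_inv_exp_one {a b : ℕ} (ha : a ≠ 0) (hab : a ≤ b) :
    (a / (b + 1) : ℝ) * ∑ k ∈ Ioc a b, (k : ℝ)⁻¹ ≤ (exp 1)⁻¹ := by
  have ha' : (0 : ℝ) < a := by positivity
  have hab' : (a : ℝ) ≤ b := by exact_mod_cast hab
  have hsum : ∑ k ∈ Ioc a b, (k : ℝ)⁻¹ ≤ -log (a / (b + 1)) := calc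
    _ ≤ log b - log a := sum_Ioc_inv_le_log_sub_log ha hab
    _ ≤ log (b + 1) - log a := by gcongr <;> linarith
    _ = -log (a / (b + 1)) := by rw [log_div ha'.ne' (by positivity)]; ring
  calc _ ≤ (a / (b + 1) : ℝ) * -log (a / (b + 1)) := by gcongr
    _ = negMulLog (a / (b + 1)) := by rw [negMulLog]; ring
    _ ≤ (exp 1)⁻¹ := negMulLog_le_inv_exp_one (by positivity)

theorem stmt5_general (n i : ℕ) (h2 : i ≤ n) :
    (1 : ℝ) / n + (((i : ℝ) - 1) / n) * ∑ j ∈ Finset.Ioc i n, 1 / ((j : ℝ) - 1)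
      ≤ 2 / n + 1 / Real.exp 1 := by
  have h1n : (1 : ℝ) / n ≤ 2 / n := by gcongr; norm_num
  suffices ((i : ℝ) - 1) / n * ∑ j ∈ Ioc i n, 1 / ((j : ℝ) - 1) ≤ (exp 1)⁻¹ by
    rw [one_div (exp 1)]; linarith
  rcases le_or_gt i 1 with hi | hi
  · have hcoef : ((i : ℝ) - 1) / n ≤ 0 :=
      div_nonpos_of_nonpos_of_nonneg (by simpa using (Nat.cast_le (α := ℝ)).2 hi) n.cast_nonneg
    have hsum : 0 ≤ ∑ j ∈ Ioc i n, 1 / ((j : ℝ) - 1) := sum_nonneg fun j hj => by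
      have : (1 : ℝ) ≤ j := by exact_mod_cast (Nat.zero_lt_of_lt (mem_Ioc.1 hj).1)
      exact one_div_nonneg.2 (sub_nonneg.2 this)
    exact (mul_nonpos_of_nonpos_of_nonneg hcoef hsum).trans (inv_pos.2 (exp_pos 1)).le
  · obtain ⟨a, rfl⟩ : ∃ a, i = a + 1 := ⟨i - 1, by omega⟩
    obtain ⟨b, rfl⟩ : ∃ b, n = b + 1 := ⟨n - 1, by omega⟩
    rw [sum_Ioc_succ_one_div_sub_one]
    push_cast
    rw [add_sub_cancel_right]
    exact div_succ_mul_sum_Ioc_inv_le_inv_exp_one (by omega) (by omega)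

theorem stmt5 (n i : ℕ) (h1 : 1 ≤ i) (h2 : i ≤ n) :
    (1 : ℝ) / n + (((i : ℝ) - 1) / n) * ∑ j ∈ Finset.Ioc i n, 1 / ((j : ℝ) - 1)
      ≤ 2 / n + 1 / Real.exp 1 :=
  stmt5_general n i h2
end

section
/- Let χ_1, ..., χ_m be independent Bernoulli (i.e., {0,1}-valued) random variables. Then P[∑_{i=1}^m χ_i ≥ 2] ≤ (P[∃ i, χ_i = 1])². -/
/-!
If two of the independent events `s i` occur, then a first one occurs at some index `k` (the event
`disjointed s k`) and another one occurs at a later index. The first-occurrence events are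
disjoint with union `⋃ i, s i`, and `disjointed s k` only involves the events up to `k`, so it is
independent of `⋃ l > k, s l`, whose probability is at most `μ (⋃ i, s i)`. Summing over `k`
gives the bound `μ (⋃ i, s i) ^ 2`.
-/

open MeasureTheory ProbabilityTheory Set

theorem ProbabilityTheory.iIndepFun.iIndepSet_preimage {Ω ι : Type*} [MeasurableSpace Ω]
    {μ : Measure Ω} {β : ι → Type*} [∀ i, MeasurableSpace (β i)] {f : ∀ i, Ω → β i}
    (hf : iIndepFun f μ) (hmeas : ∀ i, Measurable (f i)) {t : ∀ i, Set (β i)}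
    (ht : ∀ i, MeasurableSet (t i)) : iIndepSet (fun i ↦ f i ⁻¹' t i) μ :=
  hf.iIndep.iIndepSets'.iIndepSet_of_mem (fun i ↦ comap_measurable (f i) (ht i))
    fun i ↦ hmeas i (ht i)

theorem Finset.exists_ne_of_two_le_sum {ι : Type*} {t : Finset ι} {f : ι → ℕ}
    (hf : ∀ i ∈ t, f i = 0 ∨ f i = 1) (h : 2 ≤ ∑ i ∈ t, f i) :
    ∃ i ∈ t, ∃ j ∈ t, i ≠ j ∧ f i = 1 ∧ f j = 1 := by
  classical
  have hcard : ∑ i ∈ t, f i = (t.filter (f · = 1)).card := by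
    rw [Finset.card_filter]
    refine Finset.sum_congr rfl fun i hi ↦ ?_
    rcases hf i hi with h | h <;> simp [h]
  obtain ⟨i, hi, j, hj, hij⟩ := Finset.one_lt_card.mp (hcard ▸ h)
  rw [Finset.mem_filter] at hi hj
  exact ⟨i, hi.1, j, hj.1, hij, hi.2, hj.2⟩

section

variable {Ω ι : Type*} [LinearOrder ι] [LocallyFiniteOrderBot ι] {s : ι → Set Ω}

theorem measurableSet_disjointed {m : MeasurableSpace Ω} [Countable ι] {k : ι}
    (hs : ∀ j ≤ k, MeasurableSet[m] (s j)) : MeasurableSet[m] (disjointed s k) := by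
  rw [disjointed_eq_inter_compl]
  exact (hs k le_rfl).inter <| .iInter fun j ↦ .iInter fun hj ↦ (hs j hj.le).compl

theorem exists_mem_disjointed_of_mem {ω : Ω} {i : ι} (h : ω ∈ s i) :
    ∃ k ≤ i, ω ∈ disjointed s k := by
  have : ω ∈ ⋃ k ∈ Finset.Iic i, disjointed s k :=
    biUnion_Iic_disjointed s i ▸ le_partialSups s i h
  simpa using this

theorem setOf_two_mem_subset_iUnion_disjointed_inter :
    {ω | ∃ i j, i ≠ j ∧ ω ∈ s i ∧ ω ∈ s j} ⊆ ⋃ k, disjointed s k ∩ ⋃ l > k, s l := by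
  rintro ω ⟨i, j, hij, hi, hj⟩
  wlog hlt : i < j generalizing i j
  · exact this j i hij.symm hj hi (hij.lt_or_gt.resolve_left hlt)
  obtain ⟨k, hki, hk⟩ := exists_mem_disjointed_of_mem hi
  exact mem_iUnion.mpr ⟨k, hk, mem_biUnion (hki.trans_lt hlt) hj⟩

variable [MeasurableSpace Ω] {μ : Measure Ω} [Countable ι]

theorem ProbabilityTheory.iIndepSet.measure_disjointed_inter_biUnion_gt
    (hsm : ∀ i, MeasurableSet (s i)) (hs : iIndepSet s μ) (k : ι) :
    μ (disjointed s k ∩ ⋃ l > k, s l) = μ (disjointed s k) * μ (⋃ l > k, s l) := by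
  have hindep := hs.indep_generateFrom_of_disjoint hsm (Iic k) (Ioi k)
    (disjoint_left.mpr fun j hj hj' ↦ (not_lt.mpr hj) hj')
  refine hindep.indepSet_of_measurableSet ?_ ?_ |>.measure_inter_eq_mul
  · exact measurableSet_disjointed fun j hj ↦
      MeasurableSpace.measurableSet_generateFrom ⟨j, hj, rfl⟩
  · exact .iUnion fun l ↦ .iUnion fun hl ↦
      MeasurableSpace.measurableSet_generateFrom ⟨l, hl, rfl⟩

theorem ProbabilityTheory.iIndepSet.measure_two_mem_le_sq
    (hsm : ∀ i, MeasurableSet (s i)) (hs : iIndepSet s μ) :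
    μ {ω | ∃ i j, i ≠ j ∧ ω ∈ s i ∧ ω ∈ s j} ≤ μ (⋃ i, s i) ^ 2 :=
  calc μ {ω | ∃ i j, i ≠ j ∧ ω ∈ s i ∧ ω ∈ s j}
      ≤ ∑' k, μ (disjointed s k ∩ ⋃ l > k, s l) :=
        (measure_mono setOf_two_mem_subset_iUnion_disjointed_inter).trans (measure_iUnion_le _)
    _ = ∑' k, μ (disjointed s k) * μ (⋃ l > k, s l) := by
        simp_rw [hs.measure_disjointed_inter_biUnion_gt hsm]
    _ ≤ ∑' k, μ (disjointed s k) * μ (⋃ i, s i) := by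
        gcongr ∑' k, _ * μ ?_ with k
        exact iUnion₂_subset fun l _ ↦ subset_iUnion s l
    _ = μ (⋃ i, s i) ^ 2 := by
        rw [ENNReal.tsum_mul_right, ← measure_iUnion (disjoint_disjointed s)
          fun k ↦ measurableSet_disjointed fun j _ ↦ hsm j, iUnion_disjointed, sq]

end

theorem stmt7_general {Ω : Type*} [MeasurableSpace Ω] (μ : Measure Ω)
    (m : ℕ) (χ : Fin m → Ω → ℕ)
    (hmeas : ∀ i, Measurable (χ i))
    (hval : ∀ i ω, χ i ω = 0 ∨ χ i ω = 1)
    (hindep : iIndepFun χ μ) :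
    μ {ω | 2 ≤ ∑ i, χ i ω} ≤ (μ {ω | ∃ i, χ i ω = 1}) ^ 2 := by
  have hsub : {ω | 2 ≤ ∑ i, χ i ω} ⊆
      {ω | ∃ i j, i ≠ j ∧ ω ∈ χ i ⁻¹' {1} ∧ ω ∈ χ j ⁻¹' {1}} := fun ω hω ↦ by
    obtain ⟨i, -, j, -, hij, hi, hj⟩ :=
      Finset.exists_ne_of_two_le_sum (fun i _ ↦ hval i ω) hω
    exact ⟨i, j, hij, hi, hj⟩
  have hunion : {ω | ∃ i, χ i ω = 1} = ⋃ i, χ i ⁻¹' {1} := by ext; simp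
  rw [hunion]
  exact (measure_mono hsub).trans <| iIndepSet.measure_two_mem_le_sq
    (fun i ↦ hmeas i (measurableSet_singleton 1))
    (hindep.iIndepSet_preimage hmeas fun _ ↦ measurableSet_singleton 1)

theorem stmt7 {Ω : Type*} [MeasurableSpace Ω] (μ : Measure Ω) [IsProbabilityMeasure μ]
    (m : ℕ) (χ : Fin m → Ω → ℕ)
    (hmeas : ∀ i, Measurable (χ i))
    (hval : ∀ i ω, χ i ω = 0 ∨ χ i ω = 1)
    (hindep : iIndepFun χ μ) :
    μ {ω | 2 ≤ ∑ i, χ i ω} ≤ (μ {ω | ∃ i, χ i ω = 1}) ^ 2 :=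
  stmt7_general μ m χ hmeas hval hindep
end
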